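/- Let λ ≥ μ ≥ 0 (not both zero), S an origin-centered regular n-simplex in R^n, and C := λS + μ(−S). Then R(S,C) = (λ + μ/n)^{-1}, r(S,C) = (λ + nμ)^{-1}, R(−S,C) = (λ/n + μ)^{-1}, r(−S,C) = (nλ + μ)^{-1}, D(S,C) = 2/(λ+μ), and s(C) = (nλ+μ)/(λ+nμ). -/

import Mathlib

open Pointwise

/-- A convex body: compact, convex, with nonempty interior. -/
def IsBody {n : ℕ} (K : Set (Fin n → ℝ)) : Prop :=
  Convex ℝ K ∧ IsCompact K ∧ (interior K).Nonempty

/-- Circumradius of `K` w.r.t. `C`: smallest `ρ > 0` with `K` contained in a translate of `ρ • C`. -/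
noncomputable def circR {n : ℕ} (K C : Set (Fin n → ℝ)) : ℝ :=
  sInf {ρ : ℝ | 0 < ρ ∧ ∃ t : Fin n → ℝ, K ⊆ t +ᵥ ρ • C}

/-- Inradius of `K` w.r.t. `C`: largest `ρ ≥ 0` with a translate of `ρ • C` inside `K`. -/
noncomputable def inrad {n : ℕ} (K C : Set (Fin n → ℝ)) : ℝ :=
  sSup {ρ : ℝ | 0 ≤ ρ ∧ ∃ t : Fin n → ℝ, t +ᵥ ρ • C ⊆ K}

/-- Minkowski asymmetry `s(K) = R(-K, K)`. -/
noncomputable def asym {n : ℕ} (K : Set (Fin n → ℝ)) : ℝ := circR (-K) K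

/-- Diameter of `K` w.r.t. `C`: twice the maximal circumradius of a segment with endpoints in `K`. -/
noncomputable def diamC {n : ℕ} (K C : Set (Fin n → ℝ)) : ℝ :=
  sSup {d : ℝ | ∃ x ∈ K, ∃ y ∈ K, d = 2 * circR (segment ℝ x y) C}

/-- `K` is (diametrically) complete w.r.t. `C`. -/
def IsDiamComplete {n : ℕ} (K C : Set (Fin n → ℝ)) : Prop :=
  ∀ K' : Set (Fin n → ℝ), IsBody K' → K ⊂ K' → diamC K C < diamC K' C

/-- `S` is an `n`-simplex: convex hull of `n+1` affinely independent points. -/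
def IsSimplexBody {n : ℕ} (S : Set (Fin n → ℝ)) : Prop :=
  ∃ p : Fin (n + 1) → (Fin n → ℝ), AffineIndependent ℝ p ∧ S = convexHull ℝ (Set.range p)

/-- Support function of `C`. -/
noncomputable def supp {n : ℕ} (C : Set (Fin n → ℝ)) (a : Fin n → ℝ) : ℝ :=
  sSup {r : ℝ | ∃ x ∈ C, r = dotProduct a x}

/-- `A ⊆ₜ B`: `A` is contained in some translate of `B`. -/
def SubsetT {n : ℕ} (A B : Set (Fin n → ℝ)) : Prop := ∃ t : Fin n → ℝ, A ⊆ t +ᵥ B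

/-!
Let `r` be the squared circumradius of `S = conv p`, so that `p i ⬝ᵥ p i = r` and
`p i ⬝ᵥ p j = -r / n` for `i ≠ j`. The centroid of the facet opposite to `p i` is `-p i / n`,
hence `S ⊆ -n • S`; with `(a + b) • K = a • K + b • K` for convex `K` this gives
`(λ + μ / n) • S ⊆ C ⊆ (λ + n μ) • S` and `-C ⊆ s • C` with `s = (nλ + μ) / (λ + nμ)`, i.e. the
upper bounds for `R(S, C)` and `s(C)` and the lower bound for `r(S, C)`. They are sharp: an
inclusion `K ⊆ t + ρ • C` is tested against the functionals `± p i`, whose maxima over `S` are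
`r` and `r / n`. The radii of `-S` are those of the simplex `-p` with `λ` and `μ` exchanged, and
the diameter is attained by an edge `[p i, p j]`.
-/

open Set

section MinkowskiCombination

variable {E : Type*} [AddCommGroup E] [Module ℝ E] {K L : Set E} {a b c : ℝ}

theorem Convex.smul_add_smul_subset (hK : Convex ℝ K) (hc : 0 < c) (hLK : c⁻¹ • L ⊆ K)
    (ha : 0 ≤ a) (hb : 0 ≤ b) : a • K + b • L ⊆ (a + c * b) • K := by
  have hL : b • L ⊆ (c * b) • K :=
    calc b • L = (c * b) • c⁻¹ • L := by
          rw [smul_smul, mul_comm c, mul_assoc, mul_inv_cancel₀ hc.ne', mul_one]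
      _ ⊆ (c * b) • K := smul_set_mono hLK
  rw [hK.add_smul ha (by positivity)]
  exact add_subset_add_left hL

theorem Convex.add_div_smul_subset (hK : Convex ℝ K) (hc : 0 < c) (hKL : c⁻¹ • K ⊆ L)
    (ha : 0 ≤ a) (hb : 0 ≤ b) : (a + b / c) • K ⊆ a • K + b • L := by
  rw [hK.add_smul ha (by positivity), div_eq_mul_inv, ← smul_smul]
  exact add_subset_add_left (smul_set_mono hKL)

theorem Convex.segment_subset_vadd_smul_add_smul_neg (hK : Convex ℝ K) {x y : E} (hx : x ∈ K)
    (hy : y ∈ K) (hab : 0 < a + b) :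
    segment ℝ x y ⊆ ((a + b)⁻¹ * b) • (x + y) +ᵥ (a + b)⁻¹ • (a • K + b • -K) := by
  have hmem : ∀ {u v : E}, u ∈ K → v ∈ K →
      u ∈ ((a + b)⁻¹ * b) • (u + v) +ᵥ (a + b)⁻¹ • (a • K + b • -K) := by
    intro u v hu hv
    refine mem_vadd_set.2 ⟨(a + b)⁻¹ • (a • u + b • -v), smul_mem_smul_set
      (add_mem_add (smul_mem_smul_set hu) (smul_mem_smul_set (neg_mem_neg.2 hv))), ?_⟩
    rw [vadd_eq_add]
    match_scalars <;> field_simp <;> ring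
  have hconv := ((hK.smul a).add (hK.neg.smul b)).smul (a + b)⁻¹ |>.vadd (((a + b)⁻¹ * b) • (x + y))
  exact hconv.segment_subset (hmem hx hy) (add_comm x y ▸ hmem hy hx)

end MinkowskiCombination

section Radii

variable {m : ℕ} {K C : Set (Fin m → ℝ)}

theorem dotProduct_le_of_mem_convexHull {ι : Type*} {p : ι → Fin m → ℝ} {v : Fin m → ℝ} {u : ℝ}
    (h : ∀ i, v ⬝ᵥ p i ≤ u) {x : Fin m → ℝ} (hx : x ∈ convexHull ℝ (range p)) : v ⬝ᵥ x ≤ u :=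
  convexHull_min (range_subset_iff.2 h)
    (convex_halfSpace_le ⟨dotProduct_add v, fun c x => dotProduct_smul c v x⟩ u) hx

theorem dotProduct_le_of_mem_smul_add_smul_neg {a b u w : ℝ} (ha : 0 ≤ a) (hb : 0 ≤ b)
    {v : Fin m → ℝ} (hu : ∀ x ∈ K, v ⬝ᵥ x ≤ u) (hw : ∀ x ∈ K, -v ⬝ᵥ x ≤ w) {c : Fin m → ℝ}
    (hc : c ∈ a • K + b • -K) : v ⬝ᵥ c ≤ a * u + b * w := by
  obtain ⟨_, ⟨x, hx, rfl⟩, _, ⟨y, hy, rfl⟩, rfl⟩ := hc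
  have hy' : v ⬝ᵥ y ≤ w := by simpa using hw (-y) hy
  rw [dotProduct_add, dotProduct_smul, dotProduct_smul, smul_eq_mul, smul_eq_mul]
  exact add_le_add (mul_le_mul_of_nonneg_left (hu x hx) ha) (mul_le_mul_of_nonneg_left hy' hb)

theorem circR_le {ρ : ℝ} (hρ : 0 < ρ) {t : Fin m → ℝ} (h : K ⊆ t +ᵥ ρ • C) : circR K C ≤ ρ :=
  csInf_le ⟨0, fun _ hρ' => hρ'.1.le⟩ ⟨hρ, t, h⟩

theorem diamC_eq_of_forall_le {ρ : ℝ} (hle : ∀ x ∈ K, ∀ y ∈ K, circR (segment ℝ x y) C ≤ ρ)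
    {x₀ y₀ : Fin m → ℝ} (hx₀ : x₀ ∈ K) (hy₀ : y₀ ∈ K) (heq : circR (segment ℝ x₀ y₀) C = ρ) :
    diamC K C = 2 * ρ := by
  have ub : ∀ d ∈ {d : ℝ | ∃ x ∈ K, ∃ y ∈ K, d = 2 * circR (segment ℝ x y) C}, d ≤ 2 * ρ := by
    rintro _ ⟨x, hx, y, hy, rfl⟩
    linarith [hle x hx y hy]
  have mem : 2 * ρ ∈ {d : ℝ | ∃ x ∈ K, ∃ y ∈ K, d = 2 * circR (segment ℝ x y) C} :=
    ⟨x₀, hx₀, y₀, hy₀, by rw [heq]⟩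
  exact le_antisymm (csSup_le ⟨_, mem⟩ ub) (le_csSup ⟨_, ub⟩ mem)

variable {ι : Type*} [Fintype ι] [Nonempty ι]

-- Summing over `i` cancels the translation `t`, as `∑ i, a i = 0`.
theorem le_mul_of_subset_vadd_smul {a x : ι → Fin m → ℝ} (ha : ∑ i, a i = 0)
    (hx : ∀ i, x i ∈ K) {u h : ℝ} (hu : ∀ i, a i ⬝ᵥ x i = u) (hC : ∀ i, ∀ c ∈ C, a i ⬝ᵥ c ≤ h)
    {ρ : ℝ} (hρ : 0 ≤ ρ) {t : Fin m → ℝ} (hsub : K ⊆ t +ᵥ ρ • C) : u ≤ ρ * h := by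
  have hi : ∀ i, u ≤ a i ⬝ᵥ t + ρ * h := by
    intro i
    obtain ⟨_, ⟨c, hc, rfl⟩, hxc⟩ := hsub (hx i)
    rw [← hu i, ← hxc]
    dsimp only
    rw [vadd_eq_add, dotProduct_add, dotProduct_smul, smul_eq_mul]
    exact add_le_add_right (mul_le_mul_of_nonneg_left (hC i c hc) hρ) _
  have hsum := Finset.sum_le_sum fun i (_ : i ∈ Finset.univ) => hi i
  rw [Finset.sum_add_distrib, ← sum_dotProduct, ha, zero_dotProduct, zero_add,
    Finset.sum_const, Finset.sum_const] at hsum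
  exact le_of_nsmul_le_nsmul_right Finset.univ_nonempty.card_ne_zero hsum

theorem mul_le_of_vadd_smul_subset {a c : ι → Fin m → ℝ} (ha : ∑ i, a i = 0)
    (hc : ∀ i, c i ∈ C) {v g : ℝ} (hv : ∀ i, a i ⬝ᵥ c i = v) (hK : ∀ i, ∀ y ∈ K, a i ⬝ᵥ y ≤ g)
    {ρ : ℝ} {t : Fin m → ℝ} (hsub : t +ᵥ ρ • C ⊆ K) : ρ * v ≤ g := by
  have hi : ∀ i, a i ⬝ᵥ t + ρ * v ≤ g := by
    intro i
    have := hK i _ (hsub (vadd_mem_vadd_set (smul_mem_smul_set (hc i))))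
    rwa [vadd_eq_add, dotProduct_add, dotProduct_smul, smul_eq_mul, hv] at this
  have hsum := Finset.sum_le_sum fun i (_ : i ∈ Finset.univ) => hi i
  rw [Finset.sum_add_distrib, ← sum_dotProduct, ha, zero_dotProduct, zero_add,
    Finset.sum_const, Finset.sum_const] at hsum
  exact le_of_nsmul_le_nsmul_right Finset.univ_nonempty.card_ne_zero hsum

theorem circR_eq_of_certificate {ρ₀ h : ℝ} (hρ₀ : 0 < ρ₀) {t : Fin m → ℝ}
    (hsub : K ⊆ t +ᵥ ρ₀ • C) {a x : ι → Fin m → ℝ} (ha : ∑ i, a i = 0) (hx : ∀ i, x i ∈ K)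
    (hu : ∀ i, a i ⬝ᵥ x i = ρ₀ * h) (hC : ∀ i, ∀ c ∈ C, a i ⬝ᵥ c ≤ h) (hh : 0 < h) :
    circR K C = ρ₀ :=
  le_antisymm (circR_le hρ₀ hsub) <| le_csInf ⟨ρ₀, hρ₀, t, hsub⟩ fun _ ⟨hρ, _, h'⟩ =>
    le_of_mul_le_mul_right (le_mul_of_subset_vadd_smul ha hx hu hC hρ.le h') hh

theorem inrad_eq_of_certificate {ρ₀ v : ℝ} (hρ₀ : 0 ≤ ρ₀) {t : Fin m → ℝ}
    (hsub : t +ᵥ ρ₀ • C ⊆ K) {a c : ι → Fin m → ℝ} (ha : ∑ i, a i = 0) (hc : ∀ i, c i ∈ C)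
    (hv : ∀ i, a i ⬝ᵥ c i = v) (hK : ∀ i, ∀ y ∈ K, a i ⬝ᵥ y ≤ ρ₀ * v) (hv0 : 0 < v) :
    inrad K C = ρ₀ := by
  have ub : ∀ ρ ∈ {ρ : ℝ | 0 ≤ ρ ∧ ∃ t : Fin m → ℝ, t +ᵥ ρ • C ⊆ K}, ρ ≤ ρ₀ :=
    fun _ ⟨_, _, h'⟩ => le_of_mul_le_mul_right (mul_le_of_vadd_smul_subset ha hc hv hK h') hv0
  exact le_antisymm (csSup_le ⟨ρ₀, hρ₀, t, hsub⟩ ub) (le_csSup ⟨ρ₀, ub⟩ ⟨hρ₀, t, hsub⟩)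

end Radii

theorem Fin.sum_ite_eq_add_mul {R : Type*} [NonAssocSemiring R] {k : ℕ} (i : Fin (k + 1))
    (a b : R) : ∑ j, (if j = i then a else b) = a + k * b := by
  rw [Fintype.sum_eq_add_sum_compl i, if_pos rfl,
    Finset.sum_congr rfl fun j hj => if_neg (Finset.mem_compl.1 hj ∘ Finset.mem_singleton.2)]
  simp [Finset.card_compl, nsmul_eq_mul]

theorem sub_dotProduct_sub_self {m : ℕ} (x y : Fin m → ℝ) :
    (x - y) ⬝ᵥ (x - y) = x ⬝ᵥ x - 2 * (x ⬝ᵥ y) + y ⬝ᵥ y := by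
  rw [sub_dotProduct, dotProduct_sub, dotProduct_sub, dotProduct_comm y x]
  ring

-- Sum `(p i - p j) ⬝ᵥ (p i - p j)` over `j` in two ways.
theorem succ_mul_dotProduct_self_of_dist_eq {k m : ℕ} {p : Fin (k + 1) → Fin m → ℝ}
    (hsum : ∑ i, p i = 0) {c : ℝ} (hc : ∀ i j, i ≠ j → (p i - p j) ⬝ᵥ (p i - p j) = c)
    (i : Fin (k + 1)) : ((k : ℝ) + 1) * (p i ⬝ᵥ p i) = k * c - ∑ j, p j ⬝ᵥ p j := by
  have hrow : ∑ j, p i ⬝ᵥ p j = 0 := by rw [← dotProduct_sum, hsum, dotProduct_zero]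
  have h1 : ∑ j, (p i - p j) ⬝ᵥ (p i - p j) = k * c := by
    rw [← zero_add ((k : ℝ) * c), ← Fin.sum_ite_eq_add_mul i]
    refine Finset.sum_congr rfl fun j _ => ?_
    split_ifs with h
    · rw [h, sub_self, dotProduct_zero]
    · exact hc i j (Ne.symm h)
  have h2 : ∑ j, (p i - p j) ⬝ᵥ (p i - p j) = ((k : ℝ) + 1) * (p i ⬝ᵥ p i) + ∑ j, p j ⬝ᵥ p j := by
    simp only [sub_dotProduct_sub_self, Finset.sum_add_distrib, Finset.sum_sub_distrib,
      ← Finset.mul_sum, hrow, Finset.sum_const, Finset.card_univ, Fintype.card_fin, nsmul_eq_mul]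
    push_cast
    ring
  linarith

/-- The vertices `p i` of a regular simplex centred at the origin, described by their Gram matrix;
`r` is the squared circumradius. -/
structure IsCenteredRegular {k m : ℕ} (p : Fin (k + 1) → Fin m → ℝ) (r : ℝ) : Prop where
  sum_eq_zero : ∑ i, p i = 0
  pos : 0 < r
  dotProduct_self : ∀ i, p i ⬝ᵥ p i = r
  dotProduct_of_ne : ∀ i j, i ≠ j → p i ⬝ᵥ p j = -r / k

theorem exists_isCenteredRegular {k m : ℕ} {p : Fin (k + 1) → Fin m → ℝ} (hk : 0 < k)
    (hinj : Function.Injective p) (hsum : ∑ i, p i = 0)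
    (hreg : ∃ c : ℝ, ∀ i j, i ≠ j → (p i - p j) ⬝ᵥ (p i - p j) = c) :
    ∃ r, IsCenteredRegular p r := by
  obtain ⟨c, hc⟩ := hreg
  have hnorm := succ_mul_dotProduct_self_of_dist_eq hsum hc
  set T := ∑ j, p j ⬝ᵥ p j
  set r := ((k : ℝ) * c - T) / (k + 1)
  have hr : ∀ i, p i ⬝ᵥ p i = r := fun i => by
    rw [eq_div_iff (by positivity), mul_comm, hnorm]
  have hT : T = ((k : ℝ) + 1) * r := by
    simp only [T, hr, Finset.sum_const, Finset.card_univ, Fintype.card_fin, nsmul_eq_mul]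
    push_cast
    ring
  have : NeZero k := NeZero.of_pos hk
  have hr0 : r ≠ 0 := fun h0 => Fin.zero_ne_one' <| hinj <| by
    rw [dotProduct_self_eq_zero.1 ((hr 0).trans h0), dotProduct_self_eq_zero.1 ((hr 1).trans h0)]
  have hr0' : 0 ≤ r := by
    rw [← hr 0]
    exact Finset.sum_nonneg fun _ _ => mul_self_nonneg _
  refine ⟨r, hsum, hr0'.lt_of_ne' hr0, hr, fun i j hij => ?_⟩
  have hij' := sub_dotProduct_sub_self (p i) (p j)
  rw [hc i j hij, hr, hr] at hij'
  have h0 := hnorm 0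
  rw [hr] at h0
  rw [eq_div_iff (by positivity)]
  linear_combination (k / 2 : ℝ) * hij' + h0 / 2 - hT / 2

namespace IsCenteredRegular

variable {k m : ℕ} {p : Fin (k + 1) → Fin m → ℝ} {r lam mu : ℝ}

theorem dim_pos (hp : IsCenteredRegular p r) : 0 < k := by
  rcases Nat.eq_zero_or_pos k with rfl | hk
  · have h0 : p 0 = 0 := by simpa using hp.sum_eq_zero
    have := hp.dotProduct_self 0
    rw [h0, zero_dotProduct] at this
    exact absurd this hp.pos.ne
  · exact hk

theorem neg (hp : IsCenteredRegular p r) : IsCenteredRegular (-p) r where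
  sum_eq_zero := by simp [hp.sum_eq_zero]
  pos := hp.pos
  dotProduct_self i := by simp [hp.dotProduct_self]
  dotProduct_of_ne i j hij := by simp [hp.dotProduct_of_ne i j hij]

theorem dotProduct_le (hp : IsCenteredRegular p r) (i : Fin (k + 1)) {x : Fin m → ℝ}
    (hx : x ∈ convexHull ℝ (range p)) : p i ⬝ᵥ x ≤ r := by
  refine dotProduct_le_of_mem_convexHull (fun j => ?_) hx
  rcases eq_or_ne i j with rfl | hij
  · exact (hp.dotProduct_self i).le
  · rw [hp.dotProduct_of_ne i j hij, neg_div]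
    linarith [div_nonneg hp.pos.le k.cast_nonneg, hp.pos]

theorem neg_dotProduct_le (hp : IsCenteredRegular p r) (i : Fin (k + 1)) {x : Fin m → ℝ}
    (hx : x ∈ convexHull ℝ (range p)) : -p i ⬝ᵥ x ≤ r / k := by
  refine dotProduct_le_of_mem_convexHull (fun j => ?_) hx
  rw [neg_dotProduct]
  rcases eq_or_ne i j with rfl | hij
  · rw [hp.dotProduct_self i]
    linarith [div_nonneg hp.pos.le k.cast_nonneg, hp.pos]
  · rw [hp.dotProduct_of_ne i j hij, neg_div, neg_neg]

theorem sub_dotProduct_le (hp : IsCenteredRegular p r) (i j : Fin (k + 1))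
    {x : Fin m → ℝ} (hx : x ∈ convexHull ℝ (range p)) : (p i - p j) ⬝ᵥ x ≤ r + r / k := by
  rw [sub_eq_add_neg, add_dotProduct]
  exact add_le_add (hp.dotProduct_le i hx) (hp.neg_dotProduct_le j hx)

-- `-p i / k` is the centroid of the facet opposite to `p i`.
theorem inv_smul_mem_neg (hp : IsCenteredRegular p r) (i : Fin (k + 1)) :
    (k : ℝ)⁻¹ • p i ∈ -convexHull ℝ (range p) := by
  have hrest : ∑ j ∈ {i}ᶜ, p j = -p i := by
    rw [eq_neg_iff_add_eq_zero, add_comm, ← Fintype.sum_eq_add_sum_compl, hp.sum_eq_zero]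
  have hcard : (({i}ᶜ : Finset (Fin (k + 1))).card : ℝ) = k := by simp [Finset.card_compl]
  have hcm := ({i}ᶜ : Finset (Fin (k + 1))).centerMass_mem_convexHull (w := fun _ => (1 : ℝ))
    (z := p) (s := range p) (fun _ _ => zero_le_one) (by simpa [hcard] using hp.dim_pos)
    (fun j _ => mem_range_self j)
  rw [mem_neg, ← smul_neg, ← hrest]
  simpa [Finset.centerMass, hcard] using hcm

theorem inv_smul_convexHull_subset_neg (hp : IsCenteredRegular p r) :
    (k : ℝ)⁻¹ • convexHull ℝ (range p) ⊆ -convexHull ℝ (range p) := by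
  rw [← convexHull_smul]
  exact convexHull_min (by rintro _ ⟨_, ⟨i, rfl⟩, rfl⟩; exact hp.inv_smul_mem_neg i)
    (convex_convexHull ℝ _).neg

theorem inv_smul_neg_convexHull_subset (hp : IsCenteredRegular p r) :
    (k : ℝ)⁻¹ • -convexHull ℝ (range p) ⊆ convexHull ℝ (range p) := by
  rw [smul_set_neg, neg_subset]
  exact hp.inv_smul_convexHull_subset_neg

theorem smul_convexHull_subset (hp : IsCenteredRegular p r) (hlam : 0 ≤ lam) (hmu : 0 ≤ mu) :
    (lam + mu / k) • convexHull ℝ (range p) ⊆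
      lam • convexHull ℝ (range p) + mu • -convexHull ℝ (range p) :=
  (convex_convexHull ℝ _).add_div_smul_subset (Nat.cast_pos.2 hp.dim_pos)
    hp.inv_smul_convexHull_subset_neg hlam hmu

theorem subset_smul_convexHull (hp : IsCenteredRegular p r) (hlam : 0 ≤ lam) (hmu : 0 ≤ mu) :
    lam • convexHull ℝ (range p) + mu • -convexHull ℝ (range p) ⊆
      (lam + k * mu) • convexHull ℝ (range p) :=
  (convex_convexHull ℝ _).smul_add_smul_subset (Nat.cast_pos.2 hp.dim_pos)
    hp.inv_smul_neg_convexHull_subset hlam hmu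

theorem neg_subset_smul (hp : IsCenteredRegular p r) (hmu : 0 ≤ mu) (hle : mu ≤ lam)
    (hpos : 0 < lam + mu) :
    -(lam • convexHull ℝ (range p) + mu • -convexHull ℝ (range p)) ⊆
      ((k * lam + mu) / (lam + k * mu)) •
        (lam • convexHull ℝ (range p) + mu • -convexHull ℝ (range p)) := by
  set S := convexHull ℝ (range p)
  set ρ := (k * lam + mu) / (lam + k * mu)
  have hk : (0 : ℝ) < k := Nat.cast_pos.2 hp.dim_pos
  have hden : 0 < lam + k * mu := by nlinarith
  have hρ : 0 ≤ ρ := div_nonneg (by nlinarith) hden.le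
  have hρden : ρ * (lam + k * mu) = k * lam + mu := div_mul_cancel₀ _ hden.ne'
  have hρmu : ρ * mu ≤ lam := by
    rw [div_mul_eq_mul_div, div_le_iff₀ hden]
    nlinarith
  have hS : Convex ℝ S := convex_convexHull ℝ _
  calc -(lam • S + mu • -S) = (ρ * mu + (lam - ρ * mu)) • -S + mu • S := by
        rw [neg_add, ← smul_set_neg, ← smul_set_neg, neg_neg, add_sub_cancel]
    _ = (ρ * mu) • -S + ((lam - ρ * mu) • -S + mu • S) := by
        rw [hS.neg.add_smul (mul_nonneg hρ hmu) (sub_nonneg.2 hρmu), add_assoc]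
    _ ⊆ (ρ * mu) • -S + (mu + k * (lam - ρ * mu)) • S := by
        rw [add_comm ((lam - ρ * mu) • -S)]
        exact add_subset_add_left (hS.smul_add_smul_subset hk hp.inv_smul_neg_convexHull_subset
          hmu (sub_nonneg.2 hρmu))
    _ = ρ • (lam • S + mu • -S) := by
        rw [smul_add, smul_smul, smul_smul, add_comm,
          show mu + k * (lam - ρ * mu) = ρ * lam by linear_combination (-1 : ℝ) * hρden]

theorem circR_eq (hp : IsCenteredRegular p r) (hlam : 0 ≤ lam) (hmu : 0 ≤ mu)
    (hpos : 0 < lam + mu) :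
    circR (convexHull ℝ (range p)) (lam • convexHull ℝ (range p) + mu • -convexHull ℝ (range p)) =
      (lam + mu / k)⁻¹ := by
  have hk : (1 : ℝ) ≤ k := Nat.one_le_cast.2 hp.dim_pos
  have hρ : 0 < lam + mu / k := (div_pos hpos (by linarith : (0 : ℝ) < k)).trans_le <| by
    rw [add_div]
    gcongr
    exact div_le_self hlam hk
  have hh : lam * r + mu * (r / k) = r * (lam + mu / k) := by ring
  refine circR_eq_of_certificate (inv_pos.2 hρ) (t := 0) ?_ hp.sum_eq_zero
    (fun i => subset_convexHull ℝ _ (mem_range_self i)) (fun i => ?_)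
    (fun i _ hc => dotProduct_le_of_mem_smul_add_smul_neg hlam hmu (fun _ => hp.dotProduct_le i)
      (fun _ => hp.neg_dotProduct_le i) hc) (hh ▸ mul_pos hp.pos hρ)
  · rw [zero_vadd, subset_smul_set_iff₀ (inv_ne_zero hρ.ne'), inv_inv]
    exact hp.smul_convexHull_subset hlam hmu
  · rw [hp.dotProduct_self, hh, mul_comm r, inv_mul_cancel_left₀ hρ.ne']

theorem inrad_eq (hp : IsCenteredRegular p r) (hlam : 0 ≤ lam) (hmu : 0 ≤ mu)
    (hpos : 0 < lam + mu) :
    inrad (convexHull ℝ (range p)) (lam • convexHull ℝ (range p) + mu • -convexHull ℝ (range p)) =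
      (lam + k * mu)⁻¹ := by
  have hk : (1 : ℝ) ≤ k := Nat.one_le_cast.2 hp.dim_pos
  have hρ : 0 < lam + k * mu := by nlinarith
  have hh : lam * (r / k) + mu * r = r / k * (lam + k * mu) := by
    field_simp
  refine inrad_eq_of_certificate (inv_pos.2 hρ).le (t := 0) ?_ (a := fun i => -p i)
    (c := fun i => lam • -((k : ℝ)⁻¹ • p i) + mu • -p i) (v := lam * (r / k) + mu * r)
    (by rw [Finset.sum_neg_distrib, hp.sum_eq_zero, neg_zero])
    (fun i => add_mem_add (smul_mem_smul_set (mem_neg.1 (hp.inv_smul_mem_neg i)))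
      (smul_mem_smul_set (neg_mem_neg.2 (subset_convexHull ℝ _ (mem_range_self i)))))
    (fun i => ?_) (fun i y hy => ?_) ?_
  · rw [zero_vadd, smul_set_subset_iff₀ (inv_ne_zero hρ.ne'), inv_inv]
    exact hp.subset_smul_convexHull hlam hmu
  · simp only [dotProduct_add, dotProduct_smul, dotProduct_neg, neg_dotProduct, neg_neg,
      hp.dotProduct_self, smul_eq_mul]
    ring
  · rw [hh, mul_comm (r / k), inv_mul_cancel_left₀ hρ.ne']
    exact hp.neg_dotProduct_le i hy
  · rw [hh]
    exact mul_pos (div_pos hp.pos (by linarith)) hρ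

theorem circR_segment_eq (hp : IsCenteredRegular p r) (hlam : 0 ≤ lam) (hmu : 0 ≤ mu)
    (hpos : 0 < lam + mu) {i j : Fin (k + 1)} (hij : i ≠ j) :
    circR (segment ℝ (p i) (p j))
      (lam • convexHull ℝ (range p) + mu • -convexHull ℝ (range p)) = (lam + mu)⁻¹ := by
  have hmem : ∀ i, p i ∈ convexHull ℝ (range p) := fun i => subset_convexHull ℝ _ (mem_range_self i)
  have hvalue : ∀ i j, i ≠ j → (p i - p j) ⬝ᵥ p i = (lam + mu)⁻¹ * ((lam + mu) * (r + r / k)) := by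
    intro i j hij
    rw [sub_dotProduct, hp.dotProduct_self, hp.dotProduct_of_ne j i hij.symm]
    field_simp
    ring
  have hbound : ∀ i j, ∀ c ∈ lam • convexHull ℝ (range p) + mu • -convexHull ℝ (range p),
      (p i - p j) ⬝ᵥ c ≤ (lam + mu) * (r + r / k) := fun i j c hc => by
    rw [add_mul]
    refine dotProduct_le_of_mem_smul_add_smul_neg hlam hmu (fun _ => hp.sub_dotProduct_le i j)
      (fun x hx => ?_) hc
    rw [neg_sub]
    exact hp.sub_dotProduct_le j i hx
  refine circR_eq_of_certificate (inv_pos.2 hpos)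
    ((convex_convexHull ℝ _).segment_subset_vadd_smul_add_smul_neg (hmem i) (hmem j) hpos)
    (a := ![p i - p j, p j - p i]) (x := ![p i, p j]) (by simp)
    (Fin.forall_fin_two.2 ⟨left_mem_segment ℝ _ _, right_mem_segment ℝ _ _⟩)
    (Fin.forall_fin_two.2 ⟨hvalue i j hij, hvalue j i hij.symm⟩)
    (Fin.forall_fin_two.2 ⟨hbound i j, hbound j i⟩) ?_
  have := hp.pos
  positivity

theorem diamC_eq (hp : IsCenteredRegular p r) (hlam : 0 ≤ lam) (hmu : 0 ≤ mu)
    (hpos : 0 < lam + mu) :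
    diamC (convexHull ℝ (range p)) (lam • convexHull ℝ (range p) + mu • -convexHull ℝ (range p)) =
      2 * (lam + mu)⁻¹ := by
  have : NeZero k := NeZero.of_pos hp.dim_pos
  exact diamC_eq_of_forall_le (fun x hx y hy => circR_le (inv_pos.2 hpos)
      ((convex_convexHull ℝ _).segment_subset_vadd_smul_add_smul_neg hx hy hpos))
    (subset_convexHull ℝ (range p) (mem_range_self 0))
    (subset_convexHull ℝ (range p) (mem_range_self 1))
    (hp.circR_segment_eq hlam hmu hpos Fin.zero_ne_one')

theorem asym_eq (hp : IsCenteredRegular p r) (hmu : 0 ≤ mu) (hle : mu ≤ lam)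
    (hpos : 0 < lam + mu) :
    asym (lam • convexHull ℝ (range p) + mu • -convexHull ℝ (range p)) =
      (k * lam + mu) / (lam + k * mu) := by
  have hk : (0 : ℝ) < k := Nat.cast_pos.2 hp.dim_pos
  have hlam : 0 < lam := by linarith
  refine circR_eq_of_certificate (by positivity) (t := 0)
    (by rw [zero_vadd]; exact hp.neg_subset_smul hmu hle hpos)
    (a := fun i => -p i) (x := fun i => -((lam + mu / k) • p i)) (h := lam * (r / k) + mu * r)
    (by rw [Finset.sum_neg_distrib, hp.sum_eq_zero, neg_zero])
    (fun i => neg_mem_neg.2 (hp.smul_convexHull_subset hlam.le hmu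
      (smul_mem_smul_set (subset_convexHull ℝ _ (mem_range_self i)))))
    (fun i => ?_) (fun i _ hc => dotProduct_le_of_mem_smul_add_smul_neg hlam.le hmu
      (fun _ => hp.neg_dotProduct_le i) (fun x hx => by rw [neg_neg]; exact hp.dotProduct_le i hx)
      hc) (by have := hp.pos; positivity)
  simp only [neg_dotProduct, dotProduct_neg, dotProduct_smul, hp.dotProduct_self, smul_eq_mul]
  field_simp

theorem circR_neg_eq (hp : IsCenteredRegular p r) (hlam : 0 ≤ lam) (hmu : 0 ≤ mu)
    (hpos : 0 < lam + mu) :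
    circR (-convexHull ℝ (range p))
      (lam • convexHull ℝ (range p) + mu • -convexHull ℝ (range p)) = (lam / k + mu)⁻¹ := by
  have h := hp.neg.circR_eq hmu hlam (by linarith)
  rwa [← neg_range', convexHull_neg, neg_neg, add_comm (mu • _), add_comm mu] at h

theorem inrad_neg_eq (hp : IsCenteredRegular p r) (hlam : 0 ≤ lam) (hmu : 0 ≤ mu)
    (hpos : 0 < lam + mu) :
    inrad (-convexHull ℝ (range p))
      (lam • convexHull ℝ (range p) + mu • -convexHull ℝ (range p)) = (k * lam + mu)⁻¹ := by
  have h := hp.neg.inrad_eq hmu hlam (by linarith)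
  rwa [← neg_range', convexHull_neg, neg_neg, add_comm (mu • _), add_comm mu] at h

end IsCenteredRegular

theorem stmt15 {n : ℕ} (hn : 0 < n) (lam mu : ℝ) (hmu : 0 ≤ mu) (hlammu : mu ≤ lam)
    (hpos : 0 < lam + mu)
    (p : Fin (n + 1) → (Fin n → ℝ)) (hind : AffineIndependent ℝ p)
    (hsum : ∑ i, p i = 0)
    (hreg : ∃ c : ℝ, ∀ i j : Fin (n + 1), i ≠ j →
      dotProduct (p i - p j) (p i - p j) = c)
    (S C : Set (Fin n → ℝ)) (hS : S = convexHull ℝ (Set.range p))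
    (hC : C = lam • S + mu • (-S)) :
    circR S C = (lam + mu / n)⁻¹ ∧
    inrad S C = (lam + n * mu)⁻¹ ∧
    circR (-S) C = (lam / n + mu)⁻¹ ∧
    inrad (-S) C = (n * lam + mu)⁻¹ ∧
    diamC S C = 2 / (lam + mu) ∧
    asym C = (n * lam + mu) / (lam + n * mu) := by
  obtain ⟨r, hp⟩ := exists_isCenteredRegular hn hind.injective hsum hreg
  have hlam : 0 ≤ lam := hmu.trans hlammu
  subst hC hS
  exact ⟨hp.circR_eq hlam hmu hpos, hp.inrad_eq hlam hmu hpos, hp.circR_neg_eq hlam hmu hpos,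
    hp.inrad_neg_eq hlam hmu hpos, by rw [hp.diamC_eq hlam hmu hpos, div_eq_mul_inv],
    hp.asym_eq hmu hlammu hpos⟩
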